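/- arXiv:1908.09182 — 3 statements merged into one kernel-verified Lean document; each statement's English description precedes it below -/
import Mathlib

section
/- (Tube estimate, forward direction, pathwise part of Lemma 4.4.) Let γ = (γ₁, γ₂) : [0,1] → ℝ² be absolutely continuous with integrable derivative, and set C_γ := ∫₀¹ (|γ₁′(s)| + |γ₂′(s)|) ds. Let ε > 0 and let u = (u₁, u₂, u₃) : [0,1] → ℝ³ be measurable with u₁(t)² + u₂(t)² + |u₃(t)| < ε² for all t ∈ [0,1]. Define z₃(t) := u₃(t) + ∫₀ᵗ ω((u₁(s), u₂(s)), γ′(s)) ds. Then for all t ∈ [0,1]: u₁(t)² + u₂(t)² + |z₃(t)| ≤ 3ε² + ε·C_γ. -/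
/-! While `u(t)` stays in the ball of radius `ε` about `e`, both horizontal coordinates of `u`
are at most `ε` in absolute value, so the symplectic integrand is dominated by
`ε (|γ₁′| + |γ₂′|)`. Integrating, the vertical coordinate moves by at most `ε C_γ`. -/

open MeasureTheory Set

noncomputable section

/-- The standard symplectic form on `ℝ²`. -/
def omegaForm (v w : ℝ × ℝ) : ℝ := v.1 * w.2 - w.1 * v.2

lemma abs_omegaForm_le {v : ℝ × ℝ} {r : ℝ} (h₁ : |v.1| ≤ r) (h₂ : |v.2| ≤ r) (w : ℝ × ℝ) :
    |omegaForm v w| ≤ r * (|w.1| + |w.2|) :=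
  calc |omegaForm v w| ≤ |v.1| * |w.2| + |w.1| * |v.2| := by
        simpa only [omegaForm, abs_mul] using abs_sub (v.1 * w.2) (w.1 * v.2)
    _ ≤ r * |w.2| + |w.1| * r := by gcongr
    _ = r * (|w.1| + |w.2|) := by ring

lemma abs_fst_le_of_sq_add_sq_add_abs_lt {a b c ε : ℝ} (hε : 0 < ε)
    (h : a ^ 2 + b ^ 2 + |c| < ε ^ 2) : |a| ≤ ε :=
  abs_le_of_sq_le_sq (by nlinarith [sq_nonneg b, abs_nonneg c]) hε.le

lemma abs_snd_le_of_sq_add_sq_add_abs_lt {a b c ε : ℝ} (hε : 0 < ε)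
    (h : a ^ 2 + b ^ 2 + |c| < ε ^ 2) : |b| ≤ ε :=
  abs_fst_le_of_sq_add_sq_add_abs_lt hε (by linarith : b ^ 2 + a ^ 2 + |c| < ε ^ 2)

lemma norm_intervalIntegral_le_of_norm_le_of_mem_Icc {E : Type*} [NormedAddCommGroup E]
    [NormedSpace ℝ E] {f : ℝ → E} {g : ℝ → ℝ} {a b t : ℝ} (ht : t ∈ Icc a b)
    (hg : IntegrableOn g (Icc a b)) (hfg : ∀ s ∈ Icc a b, ‖f s‖ ≤ g s) :
    ‖∫ s in a..t, f s‖ ≤ ∫ s in a..b, g s := by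
  have hg_int : IntervalIntegrable g volume a b :=
    (intervalIntegrable_iff_integrableOn_Icc_of_le (ht.1.trans ht.2)).2 hg
  calc ‖∫ s in a..t, f s‖ ≤ ∫ s in a..t, g s :=
        intervalIntegral.norm_integral_le_of_norm_le ht.1
          (ae_of_all _ fun s hs => hfg s ⟨hs.1.le, hs.2.trans ht.2⟩)
          (hg_int.mono_set (uIcc_subset_uIcc_left (Icc_subset_uIcc ht)))
    _ ≤ ∫ s in a..b, g s :=
        intervalIntegral.integral_mono_interval le_rfl ht.1 ht.2
          ((ae_restrict_iff' measurableSet_Ioc).2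
            (ae_of_all _ fun s hs => (norm_nonneg _).trans (hfg s (Ioc_subset_Icc_self hs))))
          hg_int

theorem heisenberg_tube_estimate_forward_general
    (γ' : ℝ → ℝ × ℝ) (hγ' : IntegrableOn γ' (Icc (0:ℝ) 1))
    (Cγ : ℝ) (hC : Cγ = ∫ s in (0:ℝ)..1, (|(γ' s).1| + |(γ' s).2|))
    (ε : ℝ) (hε : 0 < ε)
    (u : ℝ → (ℝ × ℝ) × ℝ)
    (hub : ∀ t ∈ Icc (0:ℝ) 1, (u t).1.1 ^ 2 + (u t).1.2 ^ 2 + |(u t).2| < ε ^ 2)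
    (z₃ : ℝ → ℝ)
    (hz₃ : ∀ t, z₃ t = (u t).2 + ∫ s in (0:ℝ)..t, omegaForm (u s).1 (γ' s)) :
    ∀ t ∈ Icc (0:ℝ) 1, (u t).1.1 ^ 2 + (u t).1.2 ^ 2 + |z₃ t| ≤ 3 * ε ^ 2 + ε * Cγ := by
  intro t ht
  have hdom : ∀ s ∈ Icc (0:ℝ) 1,
      ‖omegaForm (u s).1 (γ' s)‖ ≤ ε * (|(γ' s).1| + |(γ' s).2|) := fun s hs =>
    abs_omegaForm_le (abs_fst_le_of_sq_add_sq_add_abs_lt hε (hub s hs))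
      (abs_snd_le_of_sq_add_sq_add_abs_lt hε (hub s hs)) (γ' s)
  have hintegral : |∫ s in (0:ℝ)..t, omegaForm (u s).1 (γ' s)| ≤ ε * Cγ := by
    rw [hC, ← intervalIntegral.integral_const_mul]
    exact norm_intervalIntegral_le_of_norm_le_of_mem_Icc ht
      ((hγ'.fst.abs.add hγ'.snd.abs).const_mul ε) hdom
  have hz : |z₃ t| ≤ |(u t).2| + ε * Cγ :=
    (hz₃ t ▸ abs_add_le _ _).trans (add_le_add le_rfl hintegral)
  linarith [hub t ht, sq_nonneg ε]

/-- (Tube estimate, forward direction, pathwise part of Lemma 4.4.)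
Let `γ : [0,1] → ℝ²` be absolutely continuous with integrable derivative `γ′`, and set
`C_γ := ∫₀¹ (|γ₁′(s)| + |γ₂′(s)|) ds`. Let `ε > 0` and `u = (u₁, u₂, u₃)` be measurable with
`u₁(t)² + u₂(t)² + |u₃(t)| < ε²` on `[0,1]`. Define
`z₃(t) := u₃(t) + ∫₀ᵗ ω((u₁(s), u₂(s)), γ′(s)) ds`. Then for all `t ∈ [0,1]`,
`u₁(t)² + u₂(t)² + |z₃(t)| ≤ 3 ε² + ε C_γ`. -/
theorem heisenberg_tube_estimate_forward
    (γ γ' : ℝ → ℝ × ℝ) (hγ' : IntegrableOn γ' (Icc (0:ℝ) 1))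
    (hγ : ∀ t ∈ Icc (0:ℝ) 1, γ t = γ 0 + ∫ s in (0:ℝ)..t, γ' s)
    (Cγ : ℝ) (hC : Cγ = ∫ s in (0:ℝ)..1, (|(γ' s).1| + |(γ' s).2|))
    (ε : ℝ) (hε : 0 < ε)
    (u : ℝ → (ℝ × ℝ) × ℝ) (hu : Measurable u)
    (hub : ∀ t ∈ Icc (0:ℝ) 1, (u t).1.1 ^ 2 + (u t).1.2 ^ 2 + |(u t).2| < ε ^ 2)
    (z₃ : ℝ → ℝ)
    (hz₃ : ∀ t, z₃ t = (u t).2 + ∫ s in (0:ℝ)..t, omegaForm (u s).1 (γ' s)) :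
    ∀ t ∈ Icc (0:ℝ) 1, (u t).1.1 ^ 2 + (u t).1.2 ^ 2 + |z₃ t| ≤ 3 * ε ^ 2 + ε * Cγ :=
  heisenberg_tube_estimate_forward_general γ' hγ' Cγ hC ε hε u hub z₃ hz₃
end
end

section
/- (Tube estimate, reverse direction, pathwise part of Lemma 4.4.) Let γ = (γ₁, γ₂) : [0,1] → ℝ² be absolutely continuous with integrable derivative, and set C_γ := ∫₀¹ (|γ₁′(s)| + |γ₂′(s)|) ds. Let ε > 0 and let z = (z₁, z₂, z₃) : [0,1] → ℝ³ be measurable with z₁(t)² + z₂(t)² + |z₃(t)| < ε² for all t ∈ [0,1]. Define u₃(t) := z₃(t) − ∫₀ᵗ ω((z₁(s), z₂(s)), γ′(s)) ds. Then for all t ∈ [0,1]: z₁(t)² + z₂(t)² + |u₃(t)| ≤ 3ε² + ε·C_γ. -/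
open MeasureTheory Set

noncomputable section

/-- (Tube estimate, reverse direction, pathwise part of Lemma 4.4.)
Let `γ : [0,1] → ℝ²` be absolutely continuous with integrable derivative `γ′`, and set
`C_γ := ∫₀¹ (|γ₁′(s)| + |γ₂′(s)|) ds`. Let `ε > 0` and `z = (z₁, z₂, z₃)` be measurable with
`z₁(t)² + z₂(t)² + |z₃(t)| < ε²` on `[0,1]`. Define
`u₃(t) := z₃(t) − ∫₀ᵗ ω((z₁(s), z₂(s)), γ′(s)) ds`. Then for all `t ∈ [0,1]`,
`z₁(t)² + z₂(t)² + |u₃(t)| ≤ 3 ε² + ε C_γ`. -/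
theorem heisenberg_tube_estimate_reverse
    (γ γ' : ℝ → ℝ × ℝ) (hγ' : IntegrableOn γ' (Icc (0:ℝ) 1))
    (hγ : ∀ t ∈ Icc (0:ℝ) 1, γ t = γ 0 + ∫ s in (0:ℝ)..t, γ' s)
    (Cγ : ℝ) (hC : Cγ = ∫ s in (0:ℝ)..1, (|(γ' s).1| + |(γ' s).2|))
    (ε : ℝ) (hε : 0 < ε)
    (z : ℝ → (ℝ × ℝ) × ℝ) (hzm : Measurable z)
    (hzb : ∀ t ∈ Icc (0:ℝ) 1, (z t).1.1 ^ 2 + (z t).1.2 ^ 2 + |(z t).2| < ε ^ 2)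
    (u₃ : ℝ → ℝ)
    (hu₃ : ∀ t, u₃ t = (z t).2 - ∫ s in (0:ℝ)..t, omegaForm (z s).1 (γ' s)) :
    ∀ t ∈ Icc (0:ℝ) 1, (z t).1.1 ^ 2 + (z t).1.2 ^ 2 + |u₃ t| ≤ 3 * ε ^ 2 + ε * Cγ := by
  intro t ht
  obtain ⟨ht0, ht1⟩ := ht
  set f : ℝ → ℝ := fun s => omegaForm (z s).1 (γ' s) with hf
  set g : ℝ → ℝ := fun s => ε * (|(γ' s).1| + |(γ' s).2|) with hg
  -- integrability of components of γ'
  have h1 : IntegrableOn (fun s => (γ' s).1) (Icc (0:ℝ) 1) := hγ'.fst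
  have h2 : IntegrableOn (fun s => (γ' s).2) (Icc (0:ℝ) 1) := hγ'.snd
  have hgI : IntegrableOn g (Icc (0:ℝ) 1) := ((h1.abs.add h2.abs).const_mul ε)
  -- pointwise bound on Icc 0 1
  have hbound : ∀ s ∈ Icc (0:ℝ) 1, |f s| ≤ g s := by
    intro s hs
    have hz := hzb s hs
    have hz1 : |(z s).1.1| ≤ ε := by
      nlinarith [sq_abs (z s).1.1, abs_nonneg (z s).1.1, sq_nonneg (z s).1.2,
        abs_nonneg (z s).2]
    have hz2 : |(z s).1.2| ≤ ε := by
      nlinarith [sq_abs (z s).1.2, abs_nonneg (z s).1.2, sq_nonneg (z s).1.1,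
        abs_nonneg (z s).2]
    have : |f s| ≤ |(z s).1.1| * |(γ' s).2| + |(γ' s).1| * |(z s).1.2| := by
      calc |f s| ≤ |(z s).1.1 * (γ' s).2| + |(γ' s).1 * (z s).1.2| := abs_sub _ _
        _ = |(z s).1.1| * |(γ' s).2| + |(γ' s).1| * |(z s).1.2| := by
              rw [abs_mul, abs_mul]
    have hb1 : (0:ℝ) ≤ |(γ' s).1| := abs_nonneg _
    have hb2 : (0:ℝ) ≤ |(γ' s).2| := abs_nonneg _
    simp only [hg]
    nlinarith [abs_nonneg (z s).1.1, abs_nonneg (z s).1.2]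
  -- integrability of f
  have hfI : IntegrableOn f (Icc (0:ℝ) 1) := by
    have hmeas : AEStronglyMeasurable f (volume.restrict (Icc (0:ℝ) 1)) := by
      apply AEStronglyMeasurable.sub
      · exact ((hzm.fst.fst.aestronglyMeasurable).mul h2.aestronglyMeasurable)
      · exact (h1.aestronglyMeasurable.mul (hzm.fst.snd.aestronglyMeasurable))
    exact hgI.mono' hmeas
      ((ae_restrict_iff' measurableSet_Icc).2 (Filter.Eventually.of_forall fun s hs => by
        simpa using hbound s hs))
  have hsub : Icc (0:ℝ) t ⊆ Icc 0 1 := Icc_subset_Icc le_rfl ht1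
  have hfIt : IntervalIntegrable f volume 0 t := by
    rw [intervalIntegrable_iff_integrableOn_Icc_of_le ht0]; exact hfI.mono_set hsub
  have hgIt : IntervalIntegrable g volume 0 t := by
    rw [intervalIntegrable_iff_integrableOn_Icc_of_le ht0]; exact hgI.mono_set hsub
  have hgI1 : IntervalIntegrable g volume 0 1 := by
    rw [intervalIntegrable_iff_integrableOn_Icc_of_le zero_le_one]; exact hgI
  have hgnonneg : ∀ s, 0 ≤ g s := fun s => by
    have := abs_nonneg (γ' s).1
    have := abs_nonneg (γ' s).2
    positivity
  -- key estimate on the integral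
  have key : |∫ s in (0:ℝ)..t, f s| ≤ ε * Cγ := by
    calc |∫ s in (0:ℝ)..t, f s| ≤ ∫ s in (0:ℝ)..t, |f s| :=
          intervalIntegral.abs_integral_le_integral_abs ht0
      _ ≤ ∫ s in (0:ℝ)..t, g s := by
          apply intervalIntegral.integral_mono_on ht0 hfIt.abs hgIt
          intro s hs
          exact hbound s (hsub hs)
      _ ≤ ∫ s in (0:ℝ)..1, g s := by
          apply intervalIntegral.integral_mono_interval le_rfl ht0 ht1
          · exact Filter.Eventually.of_forall fun s => hgnonneg s
          · exact hgI1
      _ = ε * Cγ := by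
          rw [hC, ← intervalIntegral.integral_const_mul]
  have hzt := hzb t ⟨ht0, ht1⟩
  have h3 : |u₃ t| ≤ |(z t).2| + |∫ s in (0:ℝ)..t, f s| := by
    rw [hu₃ t]; exact abs_sub _ _
  nlinarith [sq_nonneg (z t).1.1, sq_nonneg (z t).1.2, abs_nonneg (z t).2, sq_nonneg ε]
end
end

section
/- (Lemma 4.4, measure version.) Let (Ω, 𝓕, P) be a probability space, let γ = (γ₁, γ₂) : [0,1] → ℝ² be absolutely continuous with integrable derivative, and let U = (U₁, U₂, U₃) : Ω × [0,1] → ℝ³ be jointly measurable with continuous sample paths t ↦ U(ω, t). Define Z(ω, t) := (U₁(ω,t), U₂(ω,t), U₃(ω,t) + ∫₀ᵗ ω((U₁(ω,s), U₂(ω,s)), γ′(s)) ds), and for g = (x,y,z) ∈ ℝ³ set ρ(g, e) := (x² + y² + |z|)^{1/2}. Then lim_{ε→0⁺} P( sup_{t∈[0,1]} ρ(U(·,t), e) < ε ) = lim_{ε→0⁺} P( sup_{t∈[0,1]} ρ(Z(·,t), e) < ε ), both limits existing since the events are decreasing in ε. -/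
/-
As `ε ↓ 0` the events `{sup_t ρ(V t) < ε}` decrease to `{sup_t ρ(V t) ≤ 0}`, so by continuity
from above both limits exist and equal the probability of that event. For a process with
continuous paths the supremum is attained (so the event is `{V ≡ e on [0,1]}`) and coincides
with the supremum over a countable dense set of times (so it is measurable). Finally `U ≡ e`
iff `Z ≡ e`: `Z` has the same horizontal part as `U`, and once that part vanishes so does the
symplectic correction integral.
-/

open MeasureTheory Set Filter Topology
open scoped ENNReal

noncomputable section

/-- The homogeneous distance to the identity: `ρ(g, e) = (x² + y² + |z|)^{1/2}`
for `g = (x, y, z)`. -/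
def rho0 (g : (ℝ × ℝ) × ℝ) : ℝ := Real.sqrt (g.1.1 ^ 2 + g.1.2 ^ 2 + |g.2|)

@[simp]
lemma omegaForm_zero_left (w : ℝ × ℝ) : omegaForm 0 w = 0 := by
  simp [omegaForm]

lemma continuous_rho0 : Continuous rho0 := by
  unfold rho0
  fun_prop

lemma rho0_le_zero_iff {g : (ℝ × ℝ) × ℝ} : rho0 g ≤ 0 ↔ g = 0 := by
  rw [rho0, ← Real.sqrt_zero, Real.sqrt_le_sqrt_iff le_rfl]
  have := sq_nonneg g.1.1
  have := sq_nonneg g.1.2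
  have := abs_nonneg g.2
  constructor
  · intro h
    refine Prod.ext (Prod.ext ?_ ?_) ?_ <;> simp only [Prod.fst_zero, Prod.snd_zero]
    · nlinarith
    · nlinarith
    · exact abs_nonpos_iff.1 (by linarith)
  · rintro rfl
    simp

section SupremumOfProcess

variable {Ω T : Type*} [MeasurableSpace Ω] {μ : Measure Ω}

theorem tendsto_measure_setOf_lt_nhdsGT [IsFiniteMeasure μ] {g : Ω → ℝ} (hg : AEMeasurable g μ)
    (a : ℝ) : Tendsto (fun ε => μ {ω | g ω < ε}) (𝓝[>] a) (𝓝 (μ {ω | g ω ≤ a})) := by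
  have hInter : {ω | g ω ≤ a} = ⋂ ε > a, {ω | g ω < ε} := by
    ext ω
    simp [forall_gt_iff_le]
  rw [hInter]
  exact tendsto_measure_biInter_gt (fun _ _ => hg.nullMeasurable measurableSet_Iio)
    (fun _ _ _ hij _ hω => lt_of_lt_of_le hω hij) ⟨a + 1, by linarith, measure_ne_top μ _⟩

variable [TopologicalSpace T]

theorem aemeasurable_iSup_of_continuous [TopologicalSpace.SeparableSpace T] {f : Ω → T → ℝ}
    (hm : ∀ t, AEMeasurable (f · t) μ) (hc : ∀ ω, Continuous (f ω)) :
    AEMeasurable (fun ω => ⨆ t, f ω t) μ := by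
  obtain ⟨D, hDc, hDd⟩ := TopologicalSpace.exists_countable_dense T
  have := hDc.to_subtype
  simp_rw [← hDd.ciSup' (hc _)]
  exact AEMeasurable.iSup fun t => hm t

theorem tendsto_measure_iSup_lt_nhdsGT [IsFiniteMeasure μ] [TopologicalSpace.SeparableSpace T]
    [CompactSpace T] [Nonempty T] {f : Ω → T → ℝ} (hm : ∀ t, AEMeasurable (f · t) μ)
    (hc : ∀ ω, Continuous (f ω)) (a : ℝ) :
    Tendsto (fun ε => μ {ω | ⨆ t, f ω t < ε}) (𝓝[>] a) (𝓝 (μ {ω | ∀ t, f ω t ≤ a})) := by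
  have hsup : ∀ ω, (⨆ t, f ω t) ≤ a ↔ ∀ t, f ω t ≤ a := fun ω =>
    ciSup_le_iff (isCompact_range (hc ω)).bddAbove
  simpa only [hsup] using tendsto_measure_setOf_lt_nhdsGT (aemeasurable_iSup_of_continuous hm hc) a

end SupremumOfProcess

theorem tendsto_measure_iSup_rho0_lt {Ω : Type*} [MeasurableSpace Ω] {μ : Measure Ω}
    [IsFiniteMeasure μ] {V : Ω → ℝ → (ℝ × ℝ) × ℝ}
    (hm : ∀ t ∈ Icc (0:ℝ) 1, AEMeasurable (fun ω => V ω t) μ)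
    (hc : ∀ ω, ContinuousOn (V ω) (Icc (0:ℝ) 1)) :
    Tendsto (fun ε => μ {ω | (⨆ t : Icc (0:ℝ) 1, rho0 (V ω t)) < ε}) (𝓝[>] 0)
      (𝓝 (μ {ω | ∀ t ∈ Icc (0:ℝ) 1, V ω t = 0})) := by
  have := tendsto_measure_iSup_lt_nhdsGT (f := fun ω (t : Icc (0:ℝ) 1) => rho0 (V ω t))
    (fun t => continuous_rho0.measurable.comp_aemeasurable (hm t t.2))
    (fun ω => (continuous_rho0.comp_continuousOn (hc ω)).domRestrict) 0
  simpa only [rho0_le_zero_iff, Subtype.forall] using this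

def symplecticTwist (γ' : ℝ → ℝ × ℝ) (u : ℝ → (ℝ × ℝ) × ℝ) (t : ℝ) : (ℝ × ℝ) × ℝ :=
  ((u t).1, (u t).2 + ∫ s in (0:ℝ)..t, omegaForm (u s).1 (γ' s))

section SymplecticTwist

open scoped Interval

variable {γ' : ℝ → ℝ × ℝ} {u : ℝ → (ℝ × ℝ) × ℝ} {b : ℝ}

lemma symplecticTwist_eqOn_of_fst_eq_zero (hu : ∀ s ∈ Icc 0 b, (u s).1 = 0) :
    EqOn (symplecticTwist γ' u) u (Icc 0 b) := by
  intro t ht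
  have hzero : ∫ s in (0:ℝ)..t, omegaForm (u s).1 (γ' s) = 0 := by
    refine (intervalIntegral.integral_congr (g := 0) fun s hs => ?_).trans (by simp)
    rw [uIcc_of_le ht.1] at hs
    simp [hu s ⟨hs.1, hs.2.trans ht.2⟩]
  simp [symplecticTwist, hzero]

theorem forall_symplecticTwist_eq_zero_iff :
    (∀ t ∈ Icc 0 b, symplecticTwist γ' u t = 0) ↔ ∀ t ∈ Icc 0 b, u t = 0 := by
  constructor
  · intro h
    have hfst : ∀ s ∈ Icc 0 b, (u s).1 = 0 := fun s hs => congrArg Prod.fst (h s hs)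
    exact fun t ht => symplecticTwist_eqOn_of_fst_eq_zero hfst ht ▸ h t ht
  · intro h
    have hfst : ∀ s ∈ Icc 0 b, (u s).1 = 0 := fun s hs => by simp [h s hs]
    exact fun t ht => (symplecticTwist_eqOn_of_fst_eq_zero hfst ht).trans (h t ht)

lemma ContinuousOn.integrableOn_omegaForm {μ : Measure ℝ} {K : Set ℝ} {v w : ℝ → ℝ × ℝ}
    (hv : ContinuousOn v K) (hw : IntegrableOn w K μ) (hK : IsCompact K) :
    IntegrableOn (fun s => omegaForm (v s) (w s)) K μ :=
  (IntegrableOn.continuousOn_mul (continuous_fst.comp_continuousOn hv) hw.snd hK).sub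
    (IntegrableOn.mul_continuousOn hw.fst (continuous_snd.comp_continuousOn hv) hK)

theorem continuousOn_symplecticTwist (hu : ContinuousOn u (Icc 0 b))
    (hγ' : IntegrableOn γ' (Icc 0 b)) : ContinuousOn (symplecticTwist γ' u) (Icc 0 b) := by
  rcases lt_or_ge b 0 with hb | hb
  · simp [Icc_eq_empty_of_lt hb]
  have hprim := intervalIntegral.continuousOn_primitive_interval (a := 0) (b := b)
    (f := fun s => omegaForm (u s).1 (γ' s)) (μ := volume)
  rw [uIcc_of_le hb] at hprim
  exact (continuous_fst.comp_continuousOn hu).prodMk ((continuous_snd.comp_continuousOn hu).add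
    (hprim ((continuous_fst.comp_continuousOn hu).integrableOn_omegaForm hγ' isCompact_Icc)))

theorem aemeasurable_symplecticTwist_apply {Ω : Type*} [MeasurableSpace Ω] {μ : Measure Ω}
    {U : Ω → ℝ → (ℝ × ℝ) × ℝ} (hU : Measurable (Function.uncurry U)) {t : ℝ}
    (hγ' : AEStronglyMeasurable γ' (volume.restrict (Ι 0 t))) :
    AEMeasurable (fun ω => symplecticTwist γ' (U ω) t) μ := by
  have hUt : Measurable fun ω => U ω t := hU.comp measurable_prodMk_right
  have hintegrand : AEStronglyMeasurable (fun p : Ω × ℝ => omegaForm (U p.1 p.2).1 (γ' p.2))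
      (μ.prod (volume.restrict (Ι 0 t))) := by
    have hU' := hU.aestronglyMeasurable (μ := μ.prod (volume.restrict (Ι 0 t)))
    have hγ'' := hγ'.comp_snd (μ := μ)
    exact (hU'.fst.fst.mul hγ''.snd).sub (hγ''.fst.mul hU'.fst.snd)
  simp_rw [symplecticTwist, intervalIntegral.intervalIntegral_eq_integral_uIoc]
  refine hUt.fst.aemeasurable.prodMk (hUt.snd.aemeasurable.add ?_)
  exact hintegrand.integral_prod_right'.aemeasurable.const_smul (if 0 ≤ t then (1:ℝ) else -1)

end SymplecticTwist

theorem heisenberg_tube_probability_limits_general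
    {Ω : Type*} [MeasurableSpace Ω] (P : Measure Ω) [IsProbabilityMeasure P]
    (γ' : ℝ → ℝ × ℝ) (hγ' : IntegrableOn γ' (Icc (0:ℝ) 1))
    (U : Ω → ℝ → (ℝ × ℝ) × ℝ)
    (hU : Measurable (fun p : Ω × ℝ => U p.1 p.2))
    (hUc : ∀ ω : Ω, ContinuousOn (U ω) (Icc (0:ℝ) 1))
    (Z : Ω → ℝ → (ℝ × ℝ) × ℝ)
    (hZ : ∀ (ω : Ω) (t : ℝ), Z ω t =
      ((U ω t).1, (U ω t).2 + ∫ s in (0:ℝ)..t, omegaForm (U ω s).1 (γ' s))) :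
    ∃ L : ℝ≥0∞,
      Tendsto (fun ε : ℝ => P {ω | (⨆ t : Icc (0:ℝ) 1, rho0 (U ω t)) < ε})
        (𝓝[>] (0:ℝ)) (𝓝 L) ∧
      Tendsto (fun ε : ℝ => P {ω | (⨆ t : Icc (0:ℝ) 1, rho0 (Z ω t)) < ε})
        (𝓝[>] (0:ℝ)) (𝓝 L) := by
  obtain rfl : Z = fun ω => symplecticTwist γ' (U ω) := funext fun ω => funext (hZ ω)
  have hUm : ∀ t ∈ Icc (0:ℝ) 1, AEMeasurable (fun ω => U ω t) P := fun _ _ =>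
    (hU.comp measurable_prodMk_right).aemeasurable
  have hZm : ∀ t ∈ Icc (0:ℝ) 1, AEMeasurable (fun ω => symplecticTwist γ' (U ω) t) P :=
    fun t ht => aemeasurable_symplecticTwist_apply hU <| hγ'.aestronglyMeasurable.mono_set <|
      uIoc_of_le ht.1 ▸ Ioc_subset_Icc_self.trans (Icc_subset_Icc le_rfl ht.2)
  have hZc : ∀ ω, ContinuousOn (symplecticTwist γ' (U ω)) (Icc (0:ℝ) 1) := fun ω =>
    continuousOn_symplecticTwist (hUc ω) hγ'
  refine ⟨_, tendsto_measure_iSup_rho0_lt hUm hUc, ?_⟩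
  simpa only [forall_symplecticTwist_eq_zero_iff] using tendsto_measure_iSup_rho0_lt hZm hZc

/-- (Lemma 4.4, measure version.) Let `(Ω, 𝓕, P)` be a probability space, `γ : [0,1] → ℝ²`
absolutely continuous with integrable derivative `γ′`, and `U : Ω × [0,1] → ℝ³` jointly
measurable with continuous sample paths. Define
`Z(ω, t) := (U₁(ω,t), U₂(ω,t), U₃(ω,t) + ∫₀ᵗ ω((U₁(ω,s), U₂(ω,s)), γ′(s)) ds)`. Then
`lim_{ε→0⁺} P(sup_{t∈[0,1]} ρ(U(·,t), e) < ε) = lim_{ε→0⁺} P(sup_{t∈[0,1]} ρ(Z(·,t), e) < ε)`,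
both limits existing. -/
theorem heisenberg_tube_probability_limits
    {Ω : Type*} [MeasurableSpace Ω] (P : Measure Ω) [IsProbabilityMeasure P]
    (γ γ' : ℝ → ℝ × ℝ) (hγ' : IntegrableOn γ' (Icc (0:ℝ) 1))
    (hγ : ∀ t ∈ Icc (0:ℝ) 1, γ t = γ 0 + ∫ s in (0:ℝ)..t, γ' s)
    (U : Ω → ℝ → (ℝ × ℝ) × ℝ)
    (hU : Measurable (fun p : Ω × ℝ => U p.1 p.2))
    (hUc : ∀ ω : Ω, ContinuousOn (U ω) (Icc (0:ℝ) 1))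
    (Z : Ω → ℝ → (ℝ × ℝ) × ℝ)
    (hZ : ∀ (ω : Ω) (t : ℝ), Z ω t =
      ((U ω t).1, (U ω t).2 + ∫ s in (0:ℝ)..t, omegaForm (U ω s).1 (γ' s))) :
    ∃ L : ℝ≥0∞,
      Tendsto (fun ε : ℝ => P {ω | (⨆ t : Icc (0:ℝ) 1, rho0 (U ω t)) < ε})
        (𝓝[>] (0:ℝ)) (𝓝 L) ∧
      Tendsto (fun ε : ℝ => P {ω | (⨆ t : Icc (0:ℝ) 1, rho0 (Z ω t)) < ε})
        (𝓝[>] (0:ℝ)) (𝓝 L) :=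
  heisenberg_tube_probability_limits_general P γ' hγ' U hU hUc Z hZ
end
end
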